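/- Let P₁ and P₂ be two operations assigning to smooth functions F, G on a finite-dimensional real vector space brackets {F,G}₁ and {F,G}₂, and suppose a family of functions h_{k,r} satisfies the Lenard–Magri recursion {h_{k,r}, h_{j,s}}₁ = {h_{k,r}, h_{j+1,s}}₂ for all indices, both brackets are antisymmetric, and each h_{s,s} is a Casimir of bracket 1 ({h_{s,s}, F}₁ = 0 for all F). Then {h_{k,r}, h_{j,s}}₁ = 0 for all k ≥ 1, j ≥ s ≥ 0 and all r. -/
import Mathlib


/-- Abstract Lenard–Magri involution argument: if two antisymmetric brackets and a
family `h_{k,r}` satisfy the recursion `{h_{k,r}, h_{j,s}}₁ = {h_{k,r}, h_{j+1,s}}₂`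
and each `h_{s,s}` is a Casimir of the first bracket, then
`{h_{k,r}, h_{j,s}}₁ = 0` for all `k ≥ 1`, `j ≥ s` and all `r`. -/
theorem stmt18 (V : Type*) (B1 B2 : V → V → ℝ)
    (hB1 : ∀ x y, B1 x y = -B1 y x) (hB2 : ∀ x y, B2 x y = -B2 y x)
    (h : ℕ → ℕ → V)
    (hrec : ∀ k r j s, B1 (h k r) (h j s) = B2 (h k r) (h (j+1) s))
    (hCas : ∀ s x, B1 (h s s) x = 0) :
    ∀ k r j s, 1 ≤ k → s ≤ j → B1 (h k r) (h j s) = 0 := by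
  have step : ∀ k r j s, B1 (h (k+1) r) (h j s) = B1 (h k r) (h (j+1) s) := by
    intro k r j s
    rw [hrec (k+1) r j s, hB2, ← hrec (j+1) s k r, ← hB1]
  have main : ∀ d k r s, B1 (h k r) (h (s + d) s) = 0 := by
    intro d
    induction d with
    | zero => intro k r s; simp only [Nat.add_zero]; rw [hB1, hCas, neg_zero]
    | succ d ih =>
        intro k r s
        have : s + (d + 1) = (s + d) + 1 := by ring
        rw [this, ← step, ih]
  intro k r j s _ hj
  obtain ⟨d, rfl⟩ := Nat.exists_eq_add_of_le hj
  exact main d k r s
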